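/- Let J be a real m × d matrix, ν > 0, s > 0, τ > 0, κ = (ν+1)/((ν+3)s²), and e ∈ ℝ^m with Student-t score g(e)_i = (ν+1)e_i/(ν s² + e_i²). Then the regularized natural gradient δ = (κ JᵀJ + τ I)^{-1} Jᵀ g(e) satisfies ‖δ‖₂ ≤ (1/4)√((ν+1)(ν+3)m/(τν)). -/

import Mathlib

/-!
Pairing the normal equation `(κ JᵀJ + τ I) δ = Jᵀ g` with `δ` gives the energy identity
`κ ‖Jδ‖² + τ ‖δ‖² = ⟪Jδ, g⟫ ≤ ‖Jδ‖ ‖g‖`; completing the square in `‖Jδ‖` yields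
`4 κ τ ‖δ‖² ≤ ‖g‖²`, whatever `J` is. Each Student-t score component satisfies
`g_i² ≤ (ν+1)² / (4 ν s²)` by AM-GM (`ν s² + e² ≥ 2 √(ν s²) |e|`), and the factor `s²`
cancels against the one in `κ`.
-/

open Matrix

theorem sq_mul_div_add_sq_le {c : ℝ} (hc : 0 < c) (a x : ℝ) :
    (a * x / (c + x ^ 2)) ^ 2 ≤ a ^ 2 / (4 * c) := by
  rw [div_pow, mul_pow, div_le_div_iff₀ (by positivity) (by positivity)]
  nlinarith [mul_nonneg (sq_nonneg a) (sq_nonneg (c - x ^ 2))]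

theorem Matrix.posDef_smul_transpose_mul_self_add_smul_one {ι η : Type*} [Fintype ι]
    [Fintype η] [DecidableEq η] (J : Matrix ι η ℝ) {κ τ : ℝ} (hκ : 0 ≤ κ) (hτ : 0 < τ) :
    (κ • (Jᵀ * J) + τ • (1 : Matrix η η ℝ)).PosDef := by
  rw [add_comm]
  exact (PosDef.one.smul hτ).add_posSemidef ((posSemidef_conjTranspose_mul_self J).smul hκ)

theorem four_mul_mul_sum_sq_le_of_mulVec_eq {ι η : Type*} [Fintype ι] [Fintype η]
    [DecidableEq η] (J : Matrix ι η ℝ) {κ τ : ℝ} (hκ : 0 ≤ κ) {δ : η → ℝ} {g : ι → ℝ}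
    (h : (κ • (Jᵀ * J) + τ • (1 : Matrix η η ℝ)) *ᵥ δ = Jᵀ *ᵥ g) :
    4 * κ * τ * ∑ j, δ j ^ 2 ≤ ∑ i, g i ^ 2 := by
  have transpose_adjoint (v : ι → ℝ) : δ ⬝ᵥ Jᵀ *ᵥ v = J *ᵥ δ ⬝ᵥ v := by
    rw [dotProduct_mulVec, vecMul_transpose]
  have energy : κ * ∑ i, (J *ᵥ δ) i ^ 2 + τ * ∑ j, δ j ^ 2 = ∑ i, (J *ᵥ δ) i * g i := by
    have := congrArg (δ ⬝ᵥ ·) h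
    simp only [add_mulVec, smul_mulVec, one_mulVec, ← mulVec_mulVec, dotProduct_add,
      dotProduct_smul, transpose_adjoint, smul_eq_mul] at this
    simpa only [dotProduct, sq] using this
  have cauchySchwarz := Real.sum_mul_le_sqrt_mul_sqrt Finset.univ (J *ᵥ δ) g
  rw [← Real.sq_sqrt (Finset.sum_nonneg fun i _ ↦ sq_nonneg ((J *ᵥ δ) i))] at energy
  rw [← Real.sq_sqrt (Finset.sum_nonneg fun i _ ↦ sq_nonneg (g i))]
  set x := √(∑ i, (J *ᵥ δ) i ^ 2)
  set y := √(∑ i, g i ^ 2)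
  calc 4 * κ * τ * ∑ j, δ j ^ 2 = 4 * κ * (∑ i, (J *ᵥ δ) i * g i - κ * x ^ 2) := by
        rw [← energy]; ring
    _ ≤ 4 * κ * (x * y - κ * x ^ 2) := by gcongr
    _ ≤ y ^ 2 := by nlinarith [sq_nonneg (y - 2 * κ * x)]

/-- Main bounded-update theorem: the Tikhonov-regularized natural gradient with
a Student-t score has Euclidean norm at most `(1/4)√((ν+1)(ν+3)m/(τν))`,
independent of the scale `s` and of the error `e`. -/
theorem natsr_bounded_update
    {m d : ℕ} (J : Matrix (Fin m) (Fin d) ℝ)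
    (ν s τ : ℝ) (hν : 0 < ν) (hs : 0 < s) (hτ : 0 < τ)
    (e : Fin m → ℝ)
    (κ : ℝ) (hκ : κ = (ν + 1) / ((ν + 3) * s^2))
    (g : Fin m → ℝ) (hg : ∀ i, g i = (ν + 1) * e i / (ν * s^2 + (e i)^2))
    (δ : Fin d → ℝ)
    (hδ : δ = (κ • (Jᵀ * J) + τ • (1 : Matrix (Fin d) (Fin d) ℝ))⁻¹.mulVec
        (Jᵀ.mulVec g)) :
    Real.sqrt (∑ i, (δ i)^2)
      ≤ (1/4) * Real.sqrt ((ν + 1) * (ν + 3) * m / (τ * ν)) := by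
  have hκ0 : 0 < κ := by rw [hκ]; positivity
  have hunit := (posDef_smul_transpose_mul_self_add_smul_one J hκ0.le hτ).isUnit
  have hAδ : (κ • (Jᵀ * J) + τ • (1 : Matrix (Fin d) (Fin d) ℝ)) *ᵥ δ = Jᵀ *ᵥ g := by
    rw [hδ, mulVec_mulVec, mul_nonsing_inv _ ((isUnit_iff_isUnit_det _).mp hunit), one_mulVec]
  have hscore : ∑ i, g i ^ 2 ≤ m * ((ν + 1) ^ 2 / (4 * (ν * s ^ 2))) := by
    simpa using Finset.sum_le_card_nsmul Finset.univ (fun i ↦ g i ^ 2) _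
      fun i _ ↦ (hg i).symm ▸ sq_mul_div_add_sq_le (by positivity) (ν + 1) (e i)
  have hbound : ∑ i, δ i ^ 2 ≤ (1 / 4) ^ 2 * ((ν + 1) * (ν + 3) * m / (τ * ν)) := by
    have key := four_mul_mul_sum_sq_le_of_mulVec_eq J hκ0.le hAδ
    rw [← le_div_iff₀' (by positivity)] at key
    refine key.trans (le_of_le_of_eq (div_le_div_of_nonneg_right hscore (by positivity)) ?_)
    rw [hκ]
    field_simp
  calc √(∑ i, δ i ^ 2) ≤ √((1 / 4) ^ 2 * ((ν + 1) * (ν + 3) * m / (τ * ν))) :=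
        Real.sqrt_le_sqrt hbound
    _ = 1 / 4 * √((ν + 1) * (ν + 3) * m / (τ * ν)) := by
        rw [Real.sqrt_mul (by positivity), Real.sqrt_sq (by norm_num)]
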